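/- arXiv:1802.06355 — 3 statements merged into one kernel-verified Lean document; each statement's English description precedes it below -/
import Mathlib

section
/- Let f : ℝ → ℝ have an everywhere-convergent Chebyshev expansion f(x) = Σ_{j=0}^∞ b_j T_j(x) on [−1,1]. Let (q_i)_{i≥0} be a probability distribution on nonnegative integers with q_i ∈ (0,1), Σ_i q_i = 1, and with tails Σ_{i≥r} q_i > 0 for all r. Define the randomized truncation p̂_r(x) = Σ_{j=0}^r b_j/(1 − Σ_{i=0}^{j−1} q_i) · T_j(x). If for each x ∈ [−1,1], lim_{n→∞} Σ_{i=n+1}^∞ q_i · p̂_n(x) = 0, then for a random index n with P(n = r) = q_r, E_n[p̂_n(x)] = f(x) for every x ∈ [−1,1]. -/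
/-!
Swapping the order of summation, `∑_{r ≤ N} q_r p̂_r(x)` weights the `j`-th term
`b_j T_j(x) / P(n ≥ j)` by `P(j ≤ n ≤ N) = P(n ≥ j) - P(n > N)`, so it equals
`∑_{j ≤ N} b_j T_j(x) - P(n > N) p̂_N(x)`: a partial sum of the Chebyshev series minus a term
that tends to `0` by hypothesis. The same computation with absolute values bounds
`∑_r q_r |p̂_r(x)|` by `∑_j |b_j T_j(x)|`, which is finite because a real series that has a
sum converges absolutely; hence the expectation is an absolutely convergent series as well.
-/

open Polynomial Finset Filter

/-- The randomized Chebyshev truncation `p̂_r(x) = ∑_{j=0}^r b_j/(1-∑_{i<j} q_i) T_j(x)`. -/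
noncomputable def randTrunc (b q : ℕ → ℝ) (r : ℕ) (x : ℝ) : ℝ :=
  ∑ j ∈ Finset.range (r + 1),
    b j / (1 - ∑ i ∈ Finset.range j, q i) * (Polynomial.Chebyshev.T ℝ j).eval x

open Topology

section CommRing

variable {R : Type*} [CommRing R]

theorem sum_range_mul_sum_range_succ (q c : ℕ → R) (N : ℕ) :
    ∑ r ∈ range N, q r * ∑ j ∈ range (r + 1), c j
      = ∑ j ∈ range N, (∑ i ∈ range N, q i - ∑ i ∈ range j, q i) * c j := by
  simp_rw [mul_sum]
  rw [sum_comm' (t' := range N) (s' := fun j => Ico j N) fun r j => by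
    simp only [mem_range, mem_Ico]
    omega]
  refine sum_congr rfl fun j hj => ?_
  rw [← sum_mul, sum_Ico_eq_sub _ (mem_range.mp hj).le]

theorem sum_range_mul_sum_range_succ_eq_sub {q a c : ℕ → R}
    (hc : ∀ j, c j * (1 - ∑ i ∈ range j, q i) = a j) (N : ℕ) :
    ∑ r ∈ range N, q r * ∑ j ∈ range (r + 1), c j
      = ∑ j ∈ range N, a j - (1 - ∑ i ∈ range N, q i) * ∑ j ∈ range N, c j := by
  rw [sum_range_mul_sum_range_succ, mul_sum, ← sum_sub_distrib]
  refine sum_congr rfl fun j _ => ?_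
  linear_combination hc j

end CommRing

theorem tsum_nat_add_eq_one_sub {q : ℕ → ℝ} (hq : HasSum q 1) (j : ℕ) :
    ∑' i, q (j + i) = 1 - ∑ i ∈ range j, q i := by
  simp_rw [add_comm j]
  exact ((hasSum_nat_add_iff' j).mpr hq).tsum_eq

section Real

variable {q a c : ℕ → ℝ}

theorem summable_norm_mul_sum_range_succ (hq : ∀ i, 0 ≤ q i)
    (hs : ∀ j, ∑ i ∈ range j, q i ≤ 1)
    (hc : ∀ j, c j * (1 - ∑ i ∈ range j, q i) = a j) (ha : Summable a) :
    Summable fun r => ‖q r * ∑ j ∈ range (r + 1), c j‖ := by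
  have hc_abs (j : ℕ) : |c j| * (1 - ∑ i ∈ range j, q i) = |a j| := by
    rw [← hc j, abs_mul, abs_of_nonneg (sub_nonneg.mpr (hs j))]
  have hbound (N : ℕ) : ∑ r ∈ range N, q r * ∑ j ∈ range (r + 1), |c j| ≤ ∑' j, |a j| := by
    rw [sum_range_mul_sum_range_succ_eq_sub hc_abs]
    have hrest : 0 ≤ (1 - ∑ i ∈ range N, q i) * ∑ j ∈ range N, |c j| :=
      mul_nonneg (sub_nonneg.mpr (hs N)) (sum_nonneg fun j _ => abs_nonneg _)
    linarith [ha.abs.sum_le_tsum (range N) fun j _ => abs_nonneg (a j)]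
  refine .of_nonneg_of_le (fun r => norm_nonneg _) (fun r => ?_)
    (summable_of_sum_range_le (fun r => mul_nonneg (hq r) (sum_nonneg fun j _ => abs_nonneg _))
      hbound)
  rw [Real.norm_eq_abs, abs_mul, abs_of_nonneg (hq r)]
  exact mul_le_mul_of_nonneg_left (abs_sum_le_sum_abs _ _) (hq r)

theorem hasSum_mul_sum_range_succ {L : ℝ} (hq : ∀ i, 0 ≤ q i)
    (hs : ∀ j, ∑ i ∈ range j, q i ≤ 1)
    (hc : ∀ j, c j * (1 - ∑ i ∈ range j, q i) = a j) (ha : HasSum a L)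
    (hlim : Tendsto (fun n => (1 - ∑ i ∈ range (n + 1), q i) * ∑ j ∈ range (n + 1), c j)
      atTop (𝓝 0)) :
    HasSum (fun r => q r * ∑ j ∈ range (r + 1), c j) L := by
  rw [hasSum_iff_tendsto_nat_of_summable_norm
    (summable_norm_mul_sum_range_succ hq hs hc ha.summable), ← tendsto_add_atTop_iff_nat 1]
  simp_rw [sum_range_mul_sum_range_succ_eq_sub hc]
  simpa using ((tendsto_add_atTop_iff_nat 1).mpr ha.tendsto_sum_nat).sub hlim

end Real

theorem randomized_chebyshev_unbiased (f : ℝ → ℝ) (b q : ℕ → ℝ)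
    (hf : ∀ x ∈ Set.Icc (-1:ℝ) 1,
      HasSum (fun j : ℕ => b j * (Polynomial.Chebyshev.T ℝ j).eval x) (f x))
    (hq : ∀ i, q i ∈ Set.Ioo (0:ℝ) 1)
    (hq1 : HasSum q 1)
    (htail : ∀ r : ℕ, 0 < ∑' i : ℕ, q (r + i))
    (hlim : ∀ x ∈ Set.Icc (-1:ℝ) 1,
      Tendsto (fun n : ℕ => (∑' i : ℕ, q (n + 1 + i)) * randTrunc b q n x) atTop (nhds 0)) :
    ∀ x ∈ Set.Icc (-1:ℝ) 1,
      HasSum (fun r : ℕ => q r * randTrunc b q r x) (f x) := by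
  intro x hx
  simp_rw [tsum_nat_add_eq_one_sub hq1] at htail hlim
  refine hasSum_mul_sum_range_succ (fun i => (hq i).1.le) (fun j => by linarith [htail j])
    (fun j => ?_) (hf x hx) (hlim x hx)
  rw [div_mul_eq_mul_div, div_mul_cancel₀ _ (htail j).ne']
end

section
/- With notation as in the randomized Chebyshev truncation: if f(x) = Σ_{j=0}^∞ b_j T_j(x) with Σ_j b_j² < ∞, (q_i) a probability distribution on ℕ with all partial tails positive, p̂_r(x) = Σ_{j=0}^r b_j/(1 − Σ_{i<j} q_i)·T_j(x), and n random with P(n=r)=q_r, then the Chebyshev-weighted mean squared error satisfies E_n[ ∫_{−1}^{1} (p̂_n(x) − f(x))²/√(1−x²) dx ] = (π/2) · Σ_{j=1}^∞ b_j² · (Σ_{i=0}^{j−1} q_i)/(1 − Σ_{i=0}^{j−1} q_i). -/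
open Polynomial Finset

/-!
Expand the error in the Chebyshev basis: `p̂_r - f = ∑_j b_j (w_{r,j} - 1) T_j` with
`w_{r,j} = 1[j ≤ r] / P(n ≥ j)`, so by Parseval in `L²(dx/√(1-x²))` the weighted squared error is
`∑_j ‖T_j‖² b_j² (w_{r,j} - 1)²`. Averaging over `n` and exchanging the two nonnegative sums,
each coefficient contributes `b_j² ‖T_j‖²` times the variance of the unbiased estimator
`1[n ≥ j] / P(n ≥ j)` of `1`, which is `P(n < j) / P(n ≥ j)`; the `j = 0` term vanishes and
`‖T_j‖² = π/2` for `j ≥ 1`.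
-/

open MeasureTheory Filter

-- If the double series is not summable, both iterated sums are `0` by the junk convention.
theorem tsum_comm_of_nonneg {α β : Type*} {f : α → β → ℝ} (hf : ∀ a b, 0 ≤ f a b)
    (hrow : ∀ a, Summable (f a)) (hcol : ∀ b, Summable fun a => f a b) :
    ∑' a, ∑' b, f a b = ∑' b, ∑' a, f a b := by
  by_cases h : Summable (Function.uncurry f)
  · exact (h.tsum_comm' hrow hcol).symm
  have hrow_sum : ¬ Summable fun a => ∑' b, f a b := fun hs =>
    h ((summable_prod_of_nonneg fun p => hf p.1 p.2).2 ⟨hrow, hs⟩)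
  have hcol_sum : ¬ Summable fun b => ∑' a, f a b := fun hs =>
    h ((summable_prod_of_nonneg fun p => hf p.2 p.1).2 ⟨hcol, hs⟩).prod_symm
  rw [tsum_eq_zero_of_not_summable hrow_sum, tsum_eq_zero_of_not_summable hcol_sum]

section InnerProductSpace

variable {ι E : Type*} [NormedAddCommGroup E] [InnerProductSpace ℝ E] {e : ι → E}

theorem Orthonormal.hasSum_sq_of_hasSum_smul (he : Orthonormal ℝ e) {c : ι → ℝ} {v : E}
    (h : HasSum (fun i => c i • e i) v) : HasSum (fun i => c i ^ 2) (‖v‖ ^ 2) := by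
  have hpartial (s : Finset ι) : ∑ i ∈ s, c i ^ 2 = ‖∑ i ∈ s, c i • e i‖ ^ 2 := by
    rw [← real_inner_self_eq_norm_sq, he.inner_sum c c s]
    simp [sq]
  simp only [HasSum, hpartial]
  exact ((continuous_norm.tendsto v).pow 2).comp h

theorem Orthonormal.summable_smul_of_summable_sq [CompleteSpace E] (he : Orthonormal ℝ e)
    {c : ι → ℝ} (hc : Summable fun i => c i ^ 2) : Summable fun i => c i • e i := by
  simpa using (he.orthogonalFamily.summable_iff_norm_sq_summable c).2 (by simpa using hc)

end InnerProductSpace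

namespace MeasureTheory.Lp

variable {α E : Type*} [MeasurableSpace α] {μ : Measure α} [NormedAddCommGroup E] {p : ENNReal}

theorem coeFn_finset_sum {ι : Type*} (s : Finset ι) (f : ι → Lp E p μ) :
    ⇑(∑ i ∈ s, f i) =ᵐ[μ] ∑ i ∈ s, ⇑(f i) := by
  classical
  induction s using Finset.induction with
  | empty => simpa using Lp.coeFn_zero E p μ
  | insert i s hi ih =>
    rw [Finset.sum_insert hi, Finset.sum_insert hi]
    exact (Lp.coeFn_add _ _).trans (EventuallyEq.rfl.add ih)

theorem ae_eq_of_hasSum_of_ae_hasSum [Fact (1 ≤ p)] {f : ℕ → Lp E p μ} {F : Lp E p μ}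
    (hF : HasSum f F) {g : α → E} (hg : ∀ᵐ x ∂μ, HasSum (fun i => f i x) (g x)) :
    F =ᵐ[μ] g := by
  have hmeas : TendstoInMeasure μ (fun n => ∑ i ∈ Finset.range n, ⇑(f i)) atTop F :=
    (tendstoInMeasure_of_tendsto_Lp hF.tendsto_sum_nat).congr_left fun n => coeFn_finset_sum _ f
  obtain ⟨ns, hns, hsub⟩ := hmeas.exists_seq_tendsto_ae
  filter_upwards [hsub, hg] with x hxF hxg
  refine tendsto_nhds_unique hxF ?_
  convert hxg.tendsto_sum_nat.comp hns.tendsto_atTop using 2 with n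
  simp

end MeasureTheory.Lp

theorem MeasureTheory.L2.hasSum_integral_sq_of_orthonormal {α : Type*} [MeasurableSpace α]
    {μ : Measure α} {e : ℕ → Lp ℝ 2 μ} (he : Orthonormal ℝ e) {c : ℕ → ℝ}
    (hc : Summable fun i => c i ^ 2) {g : α → ℝ}
    (hg : ∀ᵐ x ∂μ, HasSum (fun i => c i * e i x) (g x)) :
    HasSum (fun i => c i ^ 2) (∫ x, g x ^ 2 ∂μ) := by
  obtain ⟨F, hF⟩ := he.summable_smul_of_summable_sq hc
  have hFg : F =ᵐ[μ] g := by
    refine Lp.ae_eq_of_hasSum_of_ae_hasSum hF ?_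
    filter_upwards [ae_all_iff.2 fun i => Lp.coeFn_smul (c i) (e i), hg] with x hx hxg
    simpa [hx] using hxg
  have hnorm : ‖F‖ ^ 2 = ∫ x, g x ^ 2 ∂μ := by
    rw [← real_inner_self_eq_norm_sq, L2.inner_def]
    refine integral_congr_ae ?_
    filter_upwards [hFg] with x hx
    simp [hx, sq]
  exact hnorm ▸ he.hasSum_sq_of_hasSum_smul hF

open Real

namespace Polynomial.Chebyshev

noncomputable def normSqT (n : ℕ) : ℝ := if n = 0 then π else π / 2

theorem normSqT_pos (n : ℕ) : 0 < normSqT n := by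
  unfold normSqT; split_ifs <;> positivity

theorem normSqT_le_pi (n : ℕ) : normSqT n ≤ π := by
  unfold normSqT; split_ifs <;> linarith [pi_pos]

theorem integral_eval_T_mul_eval_T_measureT (m n : ℕ) :
    ∫ x, (T ℝ m).eval x * (T ℝ n).eval x ∂measureT = if m = n then normSqT m else 0 := by
  split_ifs with hmn
  · subst hmn
    unfold normSqT
    split_ifs with hm
    · subst hm; exact integral_eval_T_real_mul_self_measureT_zero
    · exact integral_T_real_mul_self_measureT_of_ne_zero hm
  · exact integral_eval_T_real_mul_eval_T_real_measureT_of_ne hmn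

theorem memLp_two_eval_T_measureT (n : ℕ) : MemLp (fun x => (T ℝ n).eval x) 2 measureT := by
  have hcont : Continuous fun x => (T ℝ n).eval x := (T ℝ n).continuous
  refine (memLp_two_iff_integrable_sq hcont.aestronglyMeasurable).2 ?_
  exact integrable_measureT (hcont.pow 2).continuousOn

theorem ae_mem_Ioo_measureT : ∀ᵐ x ∂measureT, x ∈ Set.Ioo (-1 : ℝ) 1 := by
  have hac : measureT ≪ volume :=
    Measure.restrict_le_self.absolutelyContinuous.trans (withDensity_absolutelyContinuous _ _)
  filter_upwards [ae_restrict_mem measurableSet_Ioc, hac.ae_le (Measure.ae_ne volume 1)]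
    with x hx hx1 using ⟨hx.1, hx.2.lt_of_ne hx1⟩

noncomputable def normalizedT (n : ℕ) : Lp ℝ 2 measureT :=
  (√(normSqT n))⁻¹ • (memLp_two_eval_T_measureT n).toLp _

theorem coeFn_normalizedT (n : ℕ) :
    normalizedT n =ᵐ[measureT] fun x => (√(normSqT n))⁻¹ * (T ℝ n).eval x := by
  filter_upwards [Lp.coeFn_smul (√(normSqT n))⁻¹ ((memLp_two_eval_T_measureT n).toLp _),
    (memLp_two_eval_T_measureT n).coeFn_toLp] with x hx hx'
  rw [normalizedT, hx, Pi.smul_apply, hx', smul_eq_mul]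

theorem orthonormal_normalizedT : Orthonormal ℝ normalizedT := by
  rw [orthonormal_iff_ite]
  intro m n
  have hinner : inner ℝ ((memLp_two_eval_T_measureT m).toLp _)
      ((memLp_two_eval_T_measureT n).toLp _)
      = if m = n then normSqT m else 0 := by
    rw [L2.inner_def, ← integral_eval_T_mul_eval_T_measureT]
    refine integral_congr_ae ?_
    filter_upwards [(memLp_two_eval_T_measureT m).coeFn_toLp,
      (memLp_two_eval_T_measureT n).coeFn_toLp] with x hm hn
    simp [hm, hn, mul_comm]
  rw [normalizedT, normalizedT, real_inner_smul_left, real_inner_smul_right, hinner]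
  split_ifs with hmn
  · subst hmn
    have hm := normSqT_pos m
    field_simp
    rw [sq_sqrt hm.le]
  · simp

theorem hasSum_integral_sq_measureT {d : ℕ → ℝ} (hd : Summable fun n => d n ^ 2) {g : ℝ → ℝ}
    (hg : ∀ x ∈ Set.Ioo (-1 : ℝ) 1, HasSum (fun n => d n * (T ℝ n).eval x) (g x)) :
    HasSum (fun n => normSqT n * d n ^ 2) (∫ x, g x ^ 2 ∂measureT) := by
  have hsqrt (n : ℕ) : 0 < √(normSqT n) := sqrt_pos.2 (normSqT_pos n)
  have hc : Summable fun n => (√(normSqT n) * d n) ^ 2 := by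
    refine Summable.of_nonneg_of_le (fun n => sq_nonneg _) (fun n => ?_) (hd.mul_left π)
    rw [mul_pow, sq_sqrt (normSqT_pos n).le]
    exact mul_le_mul_of_nonneg_right (normSqT_le_pi n) (sq_nonneg _)
  have hae : ∀ᵐ x ∂measureT,
      HasSum (fun n => √(normSqT n) * d n * normalizedT n x) (g x) := by
    filter_upwards [ae_all_iff.2 coeFn_normalizedT, ae_mem_Ioo_measureT] with x hx hxI
    refine (hg x hxI).congr_fun fun n => ?_
    rw [hx n]
    field_simp [(hsqrt n).ne']
  simpa only [mul_pow, sq_sqrt (normSqT_pos _).le] using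
    L2.hasSum_integral_sq_of_orthonormal orthonormal_normalizedT hc hae

theorem tsum_normSqT_mul_eq_of_apply_zero {u : ℕ → ℝ} (hu : u 0 = 0) :
    ∑' n, normSqT n * u n = π / 2 * ∑' n, u (n + 1) := by
  rw [← tsum_mul_left, ← Nat.succ_injective.tsum_eq fun n hn => ?_]
  · simp [normSqT]
  · have hn0 : n ≠ 0 := by
      rintro rfl
      simp [hu] at hn
    exact ⟨n - 1, Nat.succ_pred_eq_of_ne_zero hn0⟩

end Polynomial.Chebyshev

open Polynomial.Chebyshev

noncomputable def randTruncWeight (q : ℕ → ℝ) (r j : ℕ) : ℝ :=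
  if j ≤ r then (1 - ∑ i ∈ range j, q i)⁻¹ else 0

theorem hasSum_randTrunc (b q : ℕ → ℝ) (r : ℕ) (x : ℝ) :
    HasSum (fun j => b j * randTruncWeight q r j * (T ℝ j).eval x) (randTrunc b q r x) := by
  have hzero : ∀ j ∉ range (r + 1), b j * randTruncWeight q r j * (T ℝ j).eval x = 0 := by
    intro j hj
    rw [randTruncWeight, if_neg (by simpa [Nat.lt_succ_iff] using hj)]
    ring
  convert hasSum_sum_of_ne_finset_zero (L := .unconditional ℕ) hzero using 1
  refine sum_congr rfl fun j hj => ?_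
  rw [randTruncWeight, if_pos (Nat.lt_succ_iff.1 (mem_range.1 hj)), div_eq_mul_inv]

theorem hasSum_mul_sq_randTruncWeight_sub_one {q : ℕ → ℝ} (hq : HasSum q 1) {j : ℕ}
    (hj : ∑ i ∈ range j, q i < 1) :
    HasSum (fun r => q r * (randTruncWeight q r j - 1) ^ 2)
      ((∑ i ∈ range j, q i) / (1 - ∑ i ∈ range j, q i)) := by
  set S := ∑ i ∈ range j, q i
  have hhead : ∑ r ∈ range j, q r * (randTruncWeight q r j - 1) ^ 2 = S :=
    sum_congr rfl fun r hr => by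
      rw [randTruncWeight, if_neg (by simpa using mem_range.1 hr)]
      ring
  have htail (r : ℕ) :
      q (r + j) * (randTruncWeight q (r + j) j - 1) ^ 2 = q (r + j) * ((1 - S)⁻¹ - 1) ^ 2 := by
    rw [randTruncWeight, if_pos (Nat.le_add_left j r)]
  have hvalue : S / (1 - S) - S = (1 - S) * ((1 - S)⁻¹ - 1) ^ 2 := by
    have hS : 1 - S ≠ 0 := (sub_pos.2 hj).ne'
    field_simp
    ring
  refine (hasSum_nat_add_iff' j).1 ?_
  rw [hhead, funext htail, hvalue]
  exact ((hasSum_nat_add_iff' j).2 hq).mul_right _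

theorem hasSum_integral_sq_randTrunc_sub {f : ℝ → ℝ} {b q : ℕ → ℝ}
    (hb : Summable fun j => b j ^ 2)
    (hf : ∀ x ∈ Set.Ioo (-1 : ℝ) 1, HasSum (fun j => b j * (T ℝ j).eval x) (f x)) (r : ℕ) :
    HasSum (fun j => normSqT j * (b j * (randTruncWeight q r j - 1)) ^ 2)
      (∫ x, (randTrunc b q r x - f x) ^ 2 ∂measureT) := by
  refine hasSum_integral_sq_measureT ?_ fun x hx => ?_
  · have htail (n : ℕ) : b (n + (r + 1)) ^ 2
        = (b (n + (r + 1)) * (randTruncWeight q r (n + (r + 1)) - 1)) ^ 2 := by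
      rw [randTruncWeight, if_neg (by omega)]
      ring
    exact (summable_nat_add_iff (r + 1)).1 (((summable_nat_add_iff (r + 1)).2 hb).congr htail)
  · exact ((hasSum_randTrunc b q r x).sub (hf x hx)).congr_fun fun j => by ring

theorem randomized_chebyshev_variance (f : ℝ → ℝ) (b q : ℕ → ℝ)
    (hb : Summable fun j : ℕ => (b j) ^ 2)
    (hf : ∀ x ∈ Set.Ioo (-1:ℝ) 1,
      HasSum (fun j : ℕ => b j * (Polynomial.Chebyshev.T ℝ j).eval x) (f x))
    (hq0 : ∀ i, 0 ≤ q i) (hq1 : HasSum q 1)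
    (hs : ∀ j : ℕ, (∑ i ∈ Finset.range j, q i) < 1) :
    ∑' r : ℕ, q r * ∫ x in (-1:ℝ)..1, (randTrunc b q r x - f x) ^ 2 / Real.sqrt (1 - x ^ 2)
      = Real.pi / 2 *
        ∑' j : ℕ, (b (j + 1)) ^ 2 *
          (∑ i ∈ Finset.range (j + 1), q i) / (1 - ∑ i ∈ Finset.range (j + 1), q i) := by
  set a : ℕ → ℕ → ℝ := fun r j => q r * (normSqT j * (b j * (randTruncWeight q r j - 1)) ^ 2)
  have hrow (r : ℕ) : HasSum (a r)
      (q r * ∫ x in (-1:ℝ)..1, (randTrunc b q r x - f x) ^ 2 / √(1 - x ^ 2)) := by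
    simpa only [integral_measureT, sqrt_inv, div_eq_mul_inv] using
      (hasSum_integral_sq_randTrunc_sub (q := q) hb hf r).mul_left (q r)
  have hcol (j : ℕ) : HasSum (fun r => a r j)
      (normSqT j * (b j ^ 2 * (∑ i ∈ range j, q i) / (1 - ∑ i ∈ range j, q i))) := by
    rw [mul_div_assoc, ← mul_assoc]
    refine ((hasSum_mul_sq_randTruncWeight_sub_one hq1 (hs j)).mul_left
      (normSqT j * b j ^ 2)).congr_fun fun r => ?_
    ring
  calc _ = ∑' r, ∑' j, a r j := tsum_congr fun r => (hrow r).tsum_eq.symm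
    _ = ∑' j, ∑' r, a r j := tsum_comm_of_nonneg
          (fun r j => mul_nonneg (hq0 r) (mul_nonneg (normSqT_pos j).le (sq_nonneg _)))
          (fun r => (hrow r).summable) (fun j => (hcol j).summable)
    _ = _ := by
      rw [tsum_congr fun j => (hcol j).tsum_eq]
      exact tsum_normSqT_mul_eq_of_apply_zero (by simp)
end

section
/- Let A = θθᵀ + εI for θ ∈ ℝ^{d×r} and ε > 0, with all eigenvalues of A in [−1,1], and let p_n(x) = Σ_{j=0}^n b_j T_j(x) with n ≥ 1. Then for any v ∈ ℝ^d, the gradient with respect to θ satisfies ∇_θ (vᵀ p_n(A) v) = 2 Σ_{i=0}^{n−1} (2 − 1_{i=0}) · w_i · (Σ_{j=i}^{n−1} b_{j+1} y_{j−i})ᵀ · θ, where w_{j+1} = 2A w_j − w_{j−1}, w_1 = Av, w_0 = v, and y_{j+1} = 2w_{j+1} + y_{j−1}, y_1 = 2Av, y_0 = v. -/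
open Matrix Polynomial Finset

/-- `A(θ) = θθᵀ + εI`. -/
noncomputable def gramMat {d r : ℕ} (ε : ℝ) (θ : Matrix (Fin d) (Fin r) ℝ) :
    Matrix (Fin d) (Fin d) ℝ :=
  θ * θ.transpose + ε • (1 : Matrix (Fin d) (Fin d) ℝ)

/-- Updating a single entry `(a, c)` of a matrix. -/
def updateEntry {d r : ℕ} (θ : Matrix (Fin d) (Fin r) ℝ) (a : Fin d) (c : Fin r)
    (t : ℝ) : Matrix (Fin d) (Fin r) ℝ :=
  Matrix.of (Function.update θ a (Function.update (θ a) c t))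

/-!
Differentiating the recurrence `T_{j+2} = 2 X T_{j+1} - T_j` along a path `A(t)` in a normed
algebra shows that the derivative of `T_j(A)` in direction `H` is
`δ_j = ∑_{m<j} c_m U_{j-1-m}(A) H T_m(A)`, where `c_0 = 1` and `c_m = 2` for `m > 0`. Running
the same argument in the opposite algebra gives the mirrored expression
`∑_{m<j} c_m T_m(A) H U_{j-1-m}(A)`, so by uniqueness of derivatives the two agree.

The derivative of `A = θθᵀ + εI` in the entry `θ_{ac}` is `E_{ac} θᵀ + θ E_{ac}ᵀ`, so
`∂/∂θ_{ac} (vᵀ T_j(A) v)` is the `(a, c)` entry of `(S + Sᵀ) θ` with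
`S = ∑_{m<j} c_m T_m(A) v vᵀ U_{j-1-m}(A) = ∑_{m<j} c_m w_m y_{j-1-m}ᵀ`. The mirror identity
(with `H = v vᵀ`) makes `S` symmetric, which gives `2 S θ`; summing against the `b_j` and
exchanging the order of summation yields the formula.
-/

open Polynomial.Chebyshev (T U)

def chebWeight (m : ℕ) : ℝ := 2 - if m = 0 then 1 else 0

@[simp] theorem chebWeight_zero : chebWeight 0 = 1 := by norm_num [chebWeight]
@[simp] theorem chebWeight_succ (m : ℕ) : chebWeight (m + 1) = 2 := by simp [chebWeight]

section ChebyshevDerivative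

variable {𝔸 : Type*} [Ring 𝔸] [Algebra ℝ 𝔸]

noncomputable def chebTDeriv (a h : 𝔸) (j : ℕ) : 𝔸 :=
  ∑ m ∈ range j, chebWeight m • (aeval a (U ℝ ↑(j - 1 - m)) * h * aeval a (T ℝ m))

theorem chebTDeriv_zero (a h : 𝔸) : chebTDeriv a h 0 = 0 := by
  simp [chebTDeriv]

theorem chebTDeriv_one (a h : 𝔸) : chebTDeriv a h 1 = h := by
  simp [chebTDeriv]

theorem chebTDeriv_add_two (a h : 𝔸) (j : ℕ) :
    chebTDeriv a h (j + 2) =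
      2 * (h * aeval a (T ℝ ↑(j + 1)) + a * chebTDeriv a h (j + 1)) - chebTDeriv a h j := by
  set S := ∑ m ∈ range j, chebWeight m • (aeval a (U ℝ ↑(j - m)) * h * aeval a (T ℝ m))
  have hlow : ∑ m ∈ range j, chebWeight m • (aeval a (U ℝ ↑(j + 1 - m)) * h * aeval a (T ℝ m))
      = 2 * (a * S) - chebTDeriv a h j := by
    rw [chebTDeriv, mul_sum, mul_sum, ← sum_sub_distrib]
    refine sum_congr rfl fun m hm => ?_
    have hm := mem_range.mp hm
    rw [show ((j + 1 - m : ℕ) : ℤ) = ↑(j - 1 - m) + 2 by omega, Chebyshev.U_add_two,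
      show ((j - 1 - m : ℕ) : ℤ) + 1 = ↑(j - m) by omega]
    simp only [map_sub, map_mul, map_ofNat, aeval_X, mul_smul_comm, sub_mul, smul_sub, mul_assoc]
  have hmid : chebTDeriv a h (j + 1) = S + chebWeight j • (h * aeval a (T ℝ j)) := by
    simp [chebTDeriv, sum_range_succ, S]
  have htop : chebTDeriv a h (j + 2) = 2 * (a * S) - chebTDeriv a h j
      + chebWeight j • (2 * a * h * aeval a (T ℝ j)) + 2 * (h * aeval a (T ℝ ↑(j + 1))) := by
    rw [← hlow]
    simp [chebTDeriv, sum_range_succ, Chebyshev.U_one, two_smul, two_mul]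
  rw [htop, hmid]
  simp only [mul_add, mul_smul_comm, mul_assoc]
  abel

end ChebyshevDerivative

section ChebyshevDerivativeNormed

variable {𝔸 : Type*} [NormedRing 𝔸] [NormedAlgebra ℝ 𝔸]

theorem HasDerivAt.aeval_chebyshev_T {A : ℝ → 𝔸} {H : 𝔸} {t : ℝ} (hA : HasDerivAt A H t)
    (j : ℕ) : HasDerivAt (fun s => aeval (A s) (T ℝ j)) (chebTDeriv (A t) H j) t := by
  induction j using Nat.twoStepInduction with
  | zero => simpa [chebTDeriv_zero] using hasDerivAt_const t (1 : 𝔸)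
  | one => simpa [chebTDeriv_one] using hA
  | more j ih₀ ih₁ =>
    have hrec : (fun s => aeval (A s) (T ℝ ↑(j + 2))) =
        fun s => 2 * (A s * aeval (A s) (T ℝ ↑(j + 1))) - aeval (A s) (T ℝ j) := by
      funext s
      rw [Nat.cast_add, Nat.cast_ofNat, Chebyshev.T_add_two]
      simp only [map_sub, map_mul, map_ofNat, aeval_X, mul_assoc, Nat.cast_add, Nat.cast_one]
    rw [hrec, chebTDeriv_add_two]
    exact ((hA.mul ih₁).const_mul 2).sub ih₀

theorem HasDerivAt.aeval_sum_C_mul_chebyshev_T {A : ℝ → 𝔸} {H : 𝔸} {t : ℝ}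
    (hA : HasDerivAt A H t) (b : ℕ → ℝ) (s : Finset ℕ) :
    HasDerivAt (fun s' => aeval (A s') (∑ j ∈ s, C (b j) * T ℝ j))
      (∑ j ∈ s, b j • chebTDeriv (A t) H j) t := by
  simp only [map_sum, map_mul, aeval_C, ← Algebra.smul_def]
  exact HasDerivAt.fun_sum fun j _ => (hA.aeval_chebyshev_T j).const_smul (b j)

theorem chebTDeriv_eq_sum_T_mul_mul_U (a h : 𝔸) (j : ℕ) :
    chebTDeriv a h j =
      ∑ m ∈ range j, chebWeight m • (aeval a (T ℝ m) * h * aeval a (U ℝ ↑(j - 1 - m))) := by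
  have hline : HasDerivAt (fun s : ℝ => a + s • h) h 0 := by
    simpa using ((hasDerivAt_id (0 : ℝ)).smul_const h).const_add a
  have hop {f : ℝ → 𝔸} {f' : 𝔸} (hf : HasDerivAt f f' 0) :
      HasDerivAt (fun s => MulOpposite.op (f s)) (MulOpposite.op f') 0 :=
    (MulOpposite.opContinuousLinearEquiv ℝ (M := 𝔸)).hasFDerivAt.comp_hasDerivAt _ hf
  have h₁ := hop (hline.aeval_chebyshev_T j)
  have h₂ := (hop hline).aeval_chebyshev_T j
  simp only [← aeval_op_apply, zero_smul, add_zero] at h₁ h₂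
  apply MulOpposite.op_injective
  simpa [chebTDeriv, aeval_op_apply, mul_assoc] using h₁.unique h₂

end ChebyshevDerivativeNormed

theorem Finset.sum_range_succ_sum_range_eq_sum_range_sum_Icc {M : Type*} [AddCommMonoid M]
    (f : ℕ → ℕ → M) (n : ℕ) :
    ∑ j ∈ range (n + 1), ∑ m ∈ range j, f j m =
      ∑ m ∈ range n, ∑ j ∈ Icc m (n - 1), f (j + 1) m := by
  rw [sum_range_succ', sum_range_zero, add_zero]
  exact sum_comm' fun j m => by simp only [mem_range, mem_Icc]; omega

theorem Matrix.vecMulVec_sum {m n ι R : Type*} [NonUnitalNonAssocSemiring R] (s : Finset ι)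
    (u : m → R) (z : ι → n → R) : vecMulVec u (∑ i ∈ s, z i) = ∑ i ∈ s, vecMulVec u (z i) := by
  ext
  simp [vecMulVec_apply, mul_sum, sum_apply]

theorem Matrix.transpose_aeval {n R : Type*} [Fintype n] [DecidableEq n] [CommSemiring R]
    (M : Matrix n n R) (p : R[X]) : (aeval M p)ᵀ = aeval Mᵀ p :=
  MulOpposite.op_injective <| by
    simpa [aeval_op_apply] using
      (aeval_algHom_apply (transposeAlgEquiv (m := n) (R := R) (α := R)) M p).symm

section ChebyshevVectors

variable {n R : Type*} [Fintype n] [DecidableEq n] [CommRing R]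

theorem eq_aeval_T_mulVec_of_rec {A : Matrix n n R} {v : n → R} {w : ℕ → n → R}
    (h0 : w 0 = v) (h1 : w 1 = A *ᵥ v)
    (hrec : ∀ j, w (j + 2) = (2 : R) • (A *ᵥ w (j + 1)) - w j) (j : ℕ) :
    w j = aeval A (T R j) *ᵥ v := by
  induction j using Nat.twoStepInduction with
  | zero => simp [h0]
  | one => simp [h1]
  | more j ih₀ ih₁ =>
    rw [hrec, ih₀, ih₁, show ((j + 2 : ℕ) : ℤ) = j + 2 by push_cast; ring, Chebyshev.T_add_two]
    simp [sub_mulVec, two_smul, two_mul, add_mul, add_mulVec]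

theorem eq_aeval_U_mulVec_of_rec {A : Matrix n n R} {v : n → R} {w y : ℕ → n → R}
    (hw : ∀ j : ℕ, w j = aeval A (T R j) *ᵥ v) (h0 : y 0 = v) (h1 : y 1 = (2 : R) • (A *ᵥ v))
    (hrec : ∀ j, y (j + 2) = (2 : R) • w (j + 2) + y j) (j : ℕ) :
    y j = aeval A (U R j) *ᵥ v := by
  induction j using Nat.twoStepInduction with
  | zero => simp [h0]
  | one => simp [h1, two_smul, two_mul, add_mulVec]
  | more j ih₀ _ =>
    rw [hrec, ih₀, hw, show ((j + 2 : ℕ) : ℤ) = j + 2 by push_cast; ring,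
      Chebyshev.U_eq_two_mul_T_add_U]
    simp [add_mulVec, two_smul, two_mul]

end ChebyshevVectors

section GramDirection

variable {m n R : Type*} [Fintype m] [Fintype n] [DecidableEq m] [DecidableEq n] [CommSemiring R]

/-- `∂(θ θᵀ)/∂θ_{ac}`. -/
def gramDirection (θ : Matrix m n R) (a : m) (c : n) : Matrix m m R :=
  single a c (1 : R) * θᵀ + θ * (single a c (1 : R))ᵀ

theorem dotProduct_gramDirection_mulVec (θ : Matrix m n R) (a : m) (c : n) (u z : m → R) :
    u ⬝ᵥ (gramDirection θ a c *ᵥ z) = ((vecMulVec u z + vecMulVec z u) * θ) a c := by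
  simp [gramDirection, dotProduct, mulVec, mul_apply, single_apply, vecMulVec_apply, add_mul,
    mul_add, sum_add_distrib, mul_sum, ite_and]
  exact congrArg₂ (· + ·) (sum_congr rfl fun _ _ => by ring) (sum_congr rfl fun _ _ => by ring)

theorem dotProduct_mul_gramDirection_mul_mulVec {P Q : Matrix m m R} (hP : Pᵀ = P)
    (hQ : Qᵀ = Q) (θ : Matrix m n R) (a : m) (c : n) (v : m → R) :
    v ⬝ᵥ ((P * gramDirection θ a c * Q) *ᵥ v) =
      ((P * vecMulVec v v * Q + Q * vecMulVec v v * P) * θ) a c := by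
  have hvec (X Y : Matrix m m R) (hY : Yᵀ = Y) :
      X * vecMulVec v v * Y = vecMulVec (X *ᵥ v) (Y *ᵥ v) := by
    rw [mul_vecMulVec, vecMulVec_mul, ← mulVec_transpose, hY]
  rw [hvec P Q hQ, hvec Q P hP, ← mulVec_mulVec, ← mulVec_mulVec, dotProduct_mulVec,
    ← mulVec_transpose, hP, dotProduct_gramDirection_mulVec]

end GramDirection

section GramCalculus

-- Any submultiplicative norm would do: it only serves to differentiate matrix-valued maps.
attribute [local instance] Matrix.linftyOpNormedRing Matrix.linftyOpNormedAlgebra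

variable {m n : Type*} [Fintype m] [Fintype n] [DecidableEq m] [DecidableEq n]

theorem chebTDeriv_vecMulVec {A : Matrix m m ℝ} (hA : Aᵀ = A) (v : m → ℝ) (j : ℕ) :
    chebTDeriv A (vecMulVec v v) j = ∑ k ∈ range j, chebWeight k •
      vecMulVec (aeval A (T ℝ k) *ᵥ v) (aeval A (U ℝ ↑(j - 1 - k)) *ᵥ v) := by
  rw [chebTDeriv_eq_sum_T_mul_mul_U]
  refine sum_congr rfl fun k _ => ?_
  rw [mul_vecMulVec, vecMulVec_mul, ← mulVec_transpose, transpose_aeval, hA]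

theorem dotProduct_chebTDeriv_gramDirection_mulVec {A : Matrix m m ℝ} (hA : Aᵀ = A)
    (θ : Matrix m n ℝ) (a : m) (c : n) (v : m → ℝ) (j : ℕ) :
    v ⬝ᵥ (chebTDeriv A (gramDirection θ a c) j *ᵥ v) =
      (((2 : ℝ) • chebTDeriv A (vecMulVec v v) j) * θ) a c := by
  have hsymm (p : ℝ[X]) : (aeval A p)ᵀ = aeval A p := by rw [transpose_aeval, hA]
  calc v ⬝ᵥ (chebTDeriv A (gramDirection θ a c) j *ᵥ v)
      = ∑ k ∈ range j, chebWeight k *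
          (v ⬝ᵥ ((aeval A (U ℝ ↑(j - 1 - k)) * gramDirection θ a c * aeval A (T ℝ k)) *ᵥ v)) := by
        simp only [chebTDeriv, sum_mulVec, dotProduct_sum, smul_mulVec, dotProduct_smul,
          smul_eq_mul]
    _ = ((chebTDeriv A (vecMulVec v v) j + ∑ k ∈ range j, chebWeight k •
          (aeval A (T ℝ k) * vecMulVec v v * aeval A (U ℝ ↑(j - 1 - k)))) * θ) a c := by
        simp only [dotProduct_mul_gramDirection_mul_mulVec (hsymm _) (hsymm _), chebTDeriv,
          ← sum_add_distrib, ← smul_add, Matrix.sum_mul, Matrix.smul_mul, Matrix.sum_apply,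
          Matrix.smul_apply, smul_eq_mul]
    _ = (((2 : ℝ) • chebTDeriv A (vecMulVec v v) j) * θ) a c := by
        rw [← chebTDeriv_eq_sum_T_mul_mul_U, two_smul]

theorem sum_smul_chebTDeriv_vecMulVec {A : Matrix m m ℝ} (hA : Aᵀ = A) {v : m → ℝ}
    {w y : ℕ → m → ℝ} (hw : ∀ j : ℕ, w j = aeval A (T ℝ j) *ᵥ v)
    (hy : ∀ j : ℕ, y j = aeval A (U ℝ j) *ᵥ v) (b : ℕ → ℝ) (n : ℕ) :
    ∑ j ∈ range (n + 1), b j • chebTDeriv A (vecMulVec v v) j =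
      ∑ i ∈ range n,
        chebWeight i • vecMulVec (w i) (∑ j ∈ Icc i (n - 1), b (j + 1) • y (j - i)) := by
  simp only [chebTDeriv_vecMulVec hA, ← hw, ← hy, smul_sum,
    sum_range_succ_sum_range_eq_sum_range_sum_Icc, vecMulVec_sum, vecMulVec_smul]
  refine sum_congr rfl fun i _ => sum_congr rfl fun j _ => ?_
  rw [Nat.add_sub_cancel, smul_comm]

theorem HasDerivAt.dotProduct_mulVec_self {M : ℝ → Matrix m m ℝ} {M' : Matrix m m ℝ} {t : ℝ}
    (hM : HasDerivAt M M' t) (v : m → ℝ) :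
    HasDerivAt (fun s => v ⬝ᵥ (M s *ᵥ v)) (v ⬝ᵥ (M' *ᵥ v)) t := by
  let L : Matrix m m ℝ →ₗ[ℝ] ℝ :=
    { toFun := fun M => v ⬝ᵥ (M *ᵥ v)
      map_add' := fun M N => by simp [add_mulVec]
      map_smul' := fun r M => by simp [smul_mulVec] }
  exact (LinearMap.toContinuousLinearMap L).hasFDerivAt.comp_hasDerivAt t hM

variable {d r : ℕ}

theorem gramMat_transpose (ε : ℝ) (θ : Matrix (Fin d) (Fin r) ℝ) :
    (gramMat ε θ)ᵀ = gramMat ε θ := by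
  simp [gramMat, transpose_add, transpose_mul]

theorem updateEntry_eq_add_smul_single (θ : Matrix (Fin d) (Fin r) ℝ) (a : Fin d)
    (c : Fin r) (t : ℝ) : updateEntry θ a c t = θ + (t - θ a c) • single a c 1 := by
  ext i l
  rw [updateEntry, of_apply, Function.update_apply (f := (θ : Fin d → Fin r → ℝ))]
  by_cases hi : i = a <;> by_cases hl : l = c <;> simp_all [eq_comm]

theorem gramMat_add_smul (ε s : ℝ) (θ E : Matrix (Fin d) (Fin r) ℝ) :
    gramMat ε (θ + s • E) = gramMat ε θ + s • (E * θᵀ + θ * Eᵀ) + s ^ 2 • (E * Eᵀ) := by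
  simp only [gramMat, transpose_add, transpose_smul, Matrix.add_mul, Matrix.mul_add,
    Matrix.smul_mul, Matrix.mul_smul]
  module

theorem hasDerivAt_gramMat_updateEntry (ε : ℝ) (θ : Matrix (Fin d) (Fin r) ℝ) (a : Fin d)
    (c : Fin r) :
    HasDerivAt (fun t => gramMat ε (updateEntry θ a c t)) (gramDirection θ a c) (θ a c) := by
  simp_rw [updateEntry_eq_add_smul_single, gramMat_add_smul]
  have h : HasDerivAt (fun t : ℝ => t - θ a c) 1 (θ a c) := (hasDerivAt_id' _).sub_const _
  exact (((h.smul_const (gramDirection θ a c)).const_add (gramMat ε θ)).fun_add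
    ((h.pow 2).smul_const (single a c (1 : ℝ) * (single a c (1 : ℝ))ᵀ))).congr_deriv (by simp)

theorem hasDerivAt_dotProduct_aeval_gramMat_updateEntry (ε : ℝ)
    (θ : Matrix (Fin d) (Fin r) ℝ) (a : Fin d) (c : Fin r) (b : ℕ → ℝ) (s : Finset ℕ)
    (v : Fin d → ℝ) :
    HasDerivAt (fun t => v ⬝ᵥ (aeval (gramMat ε (updateEntry θ a c t))
        (∑ j ∈ s, C (b j) * T ℝ j) *ᵥ v))
      ((((2 : ℝ) • ∑ j ∈ s, b j • chebTDeriv (gramMat ε θ) (vecMulVec v v) j) * θ) a c)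
      (θ a c) := by
  have h := ((hasDerivAt_gramMat_updateEntry ε θ a c).aeval_sum_C_mul_chebyshev_T b s
    ).dotProduct_mulVec_self v
  convert h using 1
  simp [updateEntry_eq_add_smul_single, sum_mulVec, dotProduct_sum, smul_mulVec,
    dotProduct_chebTDeriv_gramDirection_mulVec (gramMat_transpose ε θ), smul_sum,
    Matrix.sum_mul, Matrix.smul_mul, Matrix.sum_apply, mul_left_comm]

end GramCalculus

theorem amortized_gradient_formula_general {d r : ℕ} (θ : Matrix (Fin d) (Fin r) ℝ)
    (ε : ℝ) (b : ℕ → ℝ) (n : ℕ) (v : Fin d → ℝ)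
    (w y : ℕ → Fin d → ℝ)
    (hw0 : w 0 = v) (hw1 : w 1 = gramMat ε θ *ᵥ v)
    (hwrec : ∀ j : ℕ, 1 ≤ j →
      w (j + 1) = (2:ℝ) • (gramMat ε θ *ᵥ w j) - w (j - 1))
    (hy0 : y 0 = v) (hy1 : y 1 = (2:ℝ) • (gramMat ε θ *ᵥ v))
    (hyrec : ∀ j : ℕ, 1 ≤ j → y (j + 1) = (2:ℝ) • w (j + 1) + y (j - 1)) :
    (Matrix.of fun (a : Fin d) (c : Fin r) =>
        deriv (fun t : ℝ =>
          v ⬝ᵥ ((Polynomial.aeval (gramMat ε (updateEntry θ a c t))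
            (∑ j ∈ Finset.range (n + 1),
              Polynomial.C (b j) * Polynomial.Chebyshev.T ℝ j)) *ᵥ v)) (θ a c))
      = (2:ℝ) • ∑ i ∈ Finset.range n,
          ((2:ℝ) - if i = 0 then 1 else 0) •
            (Matrix.vecMulVec (w i)
              (∑ j ∈ Finset.Icc i (n - 1), b (j + 1) • y (j - i)) * θ) := by
  have hw := eq_aeval_T_mulVec_of_rec hw0 hw1 fun j => by simpa using hwrec (j + 1) (by omega)
  have hy := eq_aeval_U_mulVec_of_rec hw hy0 hy1 fun j => by simpa using hyrec (j + 1) (by omega)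
  ext a c
  rw [of_apply, (hasDerivAt_dotProduct_aeval_gramMat_updateEntry ε θ a c b _ v).deriv,
    sum_smul_chebTDeriv_vecMulVec (gramMat_transpose ε θ) hw hy]
  simp only [Matrix.smul_mul, Matrix.sum_mul]
  rfl

theorem amortized_gradient_formula {d r : ℕ} (θ : Matrix (Fin d) (Fin r) ℝ)
    (ε : ℝ) (hε : 0 < ε) (b : ℕ → ℝ) (n : ℕ) (hn : 1 ≤ n) (v : Fin d → ℝ)
    (hA : (gramMat ε θ).IsHermitian)
    (heig : ∀ k : Fin d, hA.eigenvalues k ∈ Set.Icc (-1:ℝ) 1)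
    (w y : ℕ → Fin d → ℝ)
    (hw0 : w 0 = v) (hw1 : w 1 = gramMat ε θ *ᵥ v)
    (hwrec : ∀ j : ℕ, 1 ≤ j →
      w (j + 1) = (2:ℝ) • (gramMat ε θ *ᵥ w j) - w (j - 1))
    (hy0 : y 0 = v) (hy1 : y 1 = (2:ℝ) • (gramMat ε θ *ᵥ v))
    (hyrec : ∀ j : ℕ, 1 ≤ j → y (j + 1) = (2:ℝ) • w (j + 1) + y (j - 1)) :
    (Matrix.of fun (a : Fin d) (c : Fin r) =>
        deriv (fun t : ℝ =>
          v ⬝ᵥ ((Polynomial.aeval (gramMat ε (updateEntry θ a c t))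
            (∑ j ∈ Finset.range (n + 1),
              Polynomial.C (b j) * Polynomial.Chebyshev.T ℝ j)) *ᵥ v)) (θ a c))
      = (2:ℝ) • ∑ i ∈ Finset.range n,
          ((2:ℝ) - if i = 0 then 1 else 0) •
            (Matrix.vecMulVec (w i)
              (∑ j ∈ Finset.Icc i (n - 1), b (j + 1) • y (j - i)) * θ) :=
  amortized_gradient_formula_general θ ε b n v w y hw0 hw1 hwrec hy0 hy1 hyrec
end
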